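/- arXiv:2211.03846 — 3 statements merged into one kernel-verified Lean document; each statement's English description precedes it below -/
import Mathlib

section
/- Let N ∈ ℕ and for each i ∈ Fin N let Ω i be a nonempty finite type. Let pa : Fin N → Finset (Fin N) satisfy j ∈ pa i → j < i, with conditional probability mass functions p_i, joint mass function P, and fix s ∈ Fin N with an intervention distribution q : Ω s → ℝ (nonnegative, summing to 1) giving the truncated mass function P_do. Call j a descendant of s if there is a chain s = i_0, i_1, …, i_m = j with m ≥ 0 and i_t ∈ pa(i_{t+1}) for all t < m, and let A be the set of all j ∈ Fin N that are NOT descendants of s. Then for every assignment y of values to the coordinates in A, the marginal probability of the event {x : x restricted to A = y} is the same under P_do as under P; that is, the joint marginal distribution of the non-descendants of the intervened node is unchanged by a perfect intervention, regardless of q. -/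
open scoped Classical

private lemma aux_sum_one {N : ℕ} {Ω : Fin N → Type} [∀ i, Fintype (Ω i)]
    (T : Finset (Fin N)) (G : (i : Fin N) → (∀ j, Ω j) → ℝ) (y₀ : ∀ j, Ω j)
    (hdep : ∀ i ∈ T, ∀ x x' : ∀ j, Ω j, (∀ j, j ≤ i → x j = x' j) → G i x = G i x')
    (hsum : ∀ i ∈ T, ∀ x : ∀ j, Ω j, ∑ a : Ω i, G i (Function.update x i a) = 1) :
    ∑ x ∈ Finset.univ.filter (fun x : ∀ j, Ω j => ∀ j ∉ T, x j = y₀ j),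
      ∏ i ∈ T, G i x = 1 := by
  classical
  revert hdep hsum
  induction T using Finset.strongInduction with
  | _ T ih =>
    intro hdep hsum
    rcases T.eq_empty_or_nonempty with rfl | hne
    · have hset : Finset.univ.filter
          (fun x : ∀ j, Ω j => ∀ j ∉ (∅ : Finset (Fin N)), x j = y₀ j) = {y₀} := by
        ext x
        simp [Finset.mem_filter, funext_iff]
      rw [hset]
      simp
    · set d := T.max' hne with hd
      have hdT : d ∈ T := T.max'_mem hne
      set T' := T.erase d with hT'
      have hssub : T' ⊂ T := Finset.erase_ssubset hdT
      have hlt : ∀ i ∈ T', i < d := by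
        intro i hi
        rcases Finset.mem_erase.1 hi with ⟨hne', hiT⟩
        exact lt_of_le_of_ne (T.le_max' i hiT) hne'
      -- reindex the sum
      have hre : ∑ x ∈ Finset.univ.filter (fun x : ∀ j, Ω j => ∀ j ∉ T, x j = y₀ j),
          ∏ i ∈ T, G i x
          = ∑ z ∈ (Finset.univ.filter
              (fun x : ∀ j, Ω j => ∀ j ∉ T', x j = y₀ j)) ×ˢ (Finset.univ : Finset (Ω d)),
            ∏ i ∈ T, G i (Function.update z.1 d z.2) := by
        refine Finset.sum_nbij' (fun x => (Function.update x d (y₀ d), x d))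
          (fun z => Function.update z.1 d z.2) ?_ ?_ ?_ ?_ ?_
        · intro x hx
          simp only [Finset.mem_filter, Finset.mem_univ, true_and] at hx
          simp only [Finset.mem_product, Finset.mem_filter, Finset.mem_univ, true_and,
            and_true]
          intro j hj
          by_cases hjd : j = d
          · subst hjd; rw [Function.update_self]
          · rw [Function.update_of_ne hjd]
            apply hx
            intro hjT
            exact hj (Finset.mem_erase.2 ⟨hjd, hjT⟩)
        · intro z hz
          simp only [Finset.mem_product, Finset.mem_filter, Finset.mem_univ, true_and,
            and_true] at hz
          simp only [Finset.mem_filter, Finset.mem_univ, true_and]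
          intro j hj
          have hjd : j ≠ d := fun h => hj (h ▸ hdT)
          rw [Function.update_of_ne hjd]
          exact hz j (fun hjT' => hj (Finset.mem_of_mem_erase hjT'))
        · intro x hx
          simp only [Function.update_idem, Function.update_eq_self]
        · intro z hz
          simp only [Finset.mem_product, Finset.mem_filter, Finset.mem_univ, true_and,
            and_true] at hz
          have h1 : z.1 d = y₀ d := hz d (Finset.notMem_erase d T)
          simp only [Function.update_idem, Function.update_self, ← h1,
            Function.update_eq_self]
        · intro x hx
          simp only [Function.update_idem, Function.update_eq_self]
      rw [hre, Finset.sum_product]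
      have hinner : ∀ z ∈ Finset.univ.filter
          (fun x : ∀ j, Ω j => ∀ j ∉ T', x j = y₀ j),
          ∑ a : Ω d, ∏ i ∈ T, G i (Function.update z d a) = ∏ i ∈ T', G i z := by
        intro z hz
        have hsplit : ∀ a : Ω d, ∏ i ∈ T, G i (Function.update z d a)
            = G d (Function.update z d a) * ∏ i ∈ T', G i z := by
          intro a
          rw [← Finset.mul_prod_erase T _ hdT]
          congr 1
          refine Finset.prod_congr rfl ?_
          intro i hi
          refine hdep i (Finset.mem_of_mem_erase hi) _ _ ?_
          intro j hj
          have : j ≠ d := ne_of_lt (lt_of_le_of_lt hj (hlt i hi))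
          rw [Function.update_of_ne this]
        calc ∑ a : Ω d, ∏ i ∈ T, G i (Function.update z d a)
            = ∑ a : Ω d, G d (Function.update z d a) * ∏ i ∈ T', G i z := by
              refine Finset.sum_congr rfl fun a _ => hsplit a
          _ = (∑ a : Ω d, G d (Function.update z d a)) * ∏ i ∈ T', G i z := by
              rw [Finset.sum_mul]
          _ = ∏ i ∈ T', G i z := by rw [hsum d hdT z, one_mul]
      rw [Finset.sum_congr rfl hinner]
      exact ih T' hssub
        (fun i hi => hdep i (Finset.mem_of_mem_erase hi))
        (fun i hi => hsum i (Finset.mem_of_mem_erase hi))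

private lemma aux_main {N : ℕ} {Ω : Fin N → Type} [∀ i, Fintype (Ω i)]
    (T : Finset (Fin N)) (G : (i : Fin N) → (∀ j, Ω j) → ℝ) (y₀ : ∀ j, Ω j)
    (hdep : ∀ i ∈ T, ∀ x x' : ∀ j, Ω j, (∀ j, j ≤ i → x j = x' j) → G i x = G i x')
    (hsum : ∀ i ∈ T, ∀ x : ∀ j, Ω j, ∑ a : Ω i, G i (Function.update x i a) = 1)
    (hfix : ∀ i ∉ T, ∀ x ∈ Finset.univ.filter
        (fun x : ∀ j, Ω j => ∀ j ∉ T, x j = y₀ j), G i x = G i y₀) :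
    ∑ x ∈ Finset.univ.filter (fun x : ∀ j, Ω j => ∀ j ∉ T, x j = y₀ j),
      ∏ i, G i x = ∏ i ∈ Tᶜ, G i y₀ := by
  classical
  have h1 : ∀ x ∈ Finset.univ.filter (fun x : ∀ j, Ω j => ∀ j ∉ T, x j = y₀ j),
      ∏ i, G i x = (∏ i ∈ T, G i x) * ∏ i ∈ Tᶜ, G i y₀ := by
    intro x hx
    rw [← Finset.prod_mul_prod_compl T (fun i => G i x)]
    congr 1
    refine Finset.prod_congr rfl fun i hi => ?_
    exact hfix i (Finset.mem_compl.1 hi) x hx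
  rw [Finset.sum_congr rfl h1, ← Finset.sum_mul,
    aux_sum_one T G y₀ hdep hsum, one_mul]

/-- For a Bayesian network with finite state spaces and topologically ordered parents,
a perfect intervention `do(X_s ∼ q)` leaves the joint marginal distribution of the
non-descendants of `s` unchanged: for every assignment `y` to the coordinates that are
not descendants of `s` (descendant meaning reachable from `s` along a directed path,
including `s` itself), the probability of the event `{x : x restricted to the
non-descendants = y}` under the truncated factorization `P_do` equals its probability
under the causal factorization `P`, regardless of `q`. -/
theorem intervention_preserves_nondescendant_marginal
    (N : ℕ) (Ω : Fin N → Type) [∀ i, Fintype (Ω i)] [∀ i, Nonempty (Ω i)]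
    (pa : Fin N → Finset (Fin N)) (hpa : ∀ i j, j ∈ pa i → j < i)
    (p : ∀ i : Fin N, ((j : {j // j ∈ pa i}) → Ω j.1) → Ω i → ℝ)
    (hp_nonneg : ∀ i par a, 0 ≤ p i par a)
    (hp_sum : ∀ i par, ∑ a : Ω i, p i par a = 1)
    (s : Fin N) (q : Ω s → ℝ)
    (hq_nonneg : ∀ a, 0 ≤ q a) (hq_sum : ∑ a : Ω s, q a = 1)
    (y : (j : {j : Fin N // ¬ Relation.ReflTransGen (fun a b => a ∈ pa b) s j}) → Ω j.1) :
    ∑ x ∈ Finset.univ.filter (fun x : (∀ i, Ω i) =>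
        ∀ (j : Fin N) (h : ¬ Relation.ReflTransGen (fun a b => a ∈ pa b) s j),
          x j = y ⟨j, h⟩),
      q (x s) * ∏ i ∈ Finset.univ.erase s, p i (fun j => x j.1) (x i)
    = ∑ x ∈ Finset.univ.filter (fun x : (∀ i, Ω i) =>
        ∀ (j : Fin N) (h : ¬ Relation.ReflTransGen (fun a b => a ∈ pa b) s j),
          x j = y ⟨j, h⟩),
      ∏ i, p i (fun j => x j.1) (x i) := by
  classical
  set Desc : Finset (Fin N) := Finset.univ.filter
    (fun j => Relation.ReflTransGen (fun a b => a ∈ pa b) s j) with hDesc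
  have hmemD : ∀ j, j ∈ Desc ↔ Relation.ReflTransGen (fun a b => a ∈ pa b) s j := by
    intro j; simp [hDesc]
  have hsD : s ∈ Desc := (hmemD s).2 Relation.ReflTransGen.refl
  have hclosed : ∀ i, i ∉ Desc → ∀ j ∈ pa i, j ∉ Desc := by
    intro i hi j hj hjD
    exact hi ((hmemD i).2 (((hmemD j).1 hjD).tail hj))
  set y₀ : ∀ j, Ω j := fun j =>
    if h : Relation.ReflTransGen (fun a b => a ∈ pa b) s j then Classical.arbitrary (Ω j)
    else y ⟨j, h⟩ with hy₀
  have hy₀eq : ∀ (j : Fin N) (h : ¬ Relation.ReflTransGen (fun a b => a ∈ pa b) s j),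
      y₀ j = y ⟨j, h⟩ := fun j h => dif_neg h
  have hfilter : (Finset.univ.filter (fun x : (∀ i, Ω i) =>
      ∀ (j : Fin N) (h : ¬ Relation.ReflTransGen (fun a b => a ∈ pa b) s j),
        x j = y ⟨j, h⟩))
      = Finset.univ.filter (fun x : ∀ j, Ω j => ∀ j ∉ Desc, x j = y₀ j) := by
    ext x
    simp only [Finset.mem_filter, Finset.mem_univ, true_and]
    constructor
    · intro h j hj
      have hj' : ¬ Relation.ReflTransGen (fun a b => a ∈ pa b) s j :=
        fun hc => hj ((hmemD j).2 hc)
      rw [h j hj', hy₀eq j hj']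
    · intro h j hj
      have hjD : j ∉ Desc := fun hc => hj ((hmemD j).1 hc)
      rw [h j hjD, hy₀eq j hj]
  -- the two factor systems
  set G1 : (i : Fin N) → (∀ j, Ω j) → ℝ :=
    fun i x => if i = s then q (x s) else p i (fun j => x j.1) (x i) with hG1
  set G2 : (i : Fin N) → (∀ j, Ω j) → ℝ :=
    fun i x => p i (fun j => x j.1) (x i) with hG2
  have hG1s : ∀ x : ∀ j, Ω j, G1 s x = q (x s) := fun x => if_pos rfl
  have hG1ne : ∀ i : Fin N, i ≠ s → ∀ x : ∀ j, Ω j, G1 i x = G2 i x :=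
    fun i hi x => if_neg hi
  -- generic facts about p-factors
  have hdep2 : ∀ i : Fin N, ∀ x x' : ∀ j, Ω j,
      (∀ j, j ≤ i → x j = x' j) → G2 i x = G2 i x' := by
    intro i x x' h
    have h1 : (fun j : {j // j ∈ pa i} => x j.1) = (fun j : {j // j ∈ pa i} => x' j.1) := by
      funext j
      exact h j.1 (le_of_lt (hpa i j.1 j.2))
    show p i (fun j : {j // j ∈ pa i} => x j.1) (x i)
        = p i (fun j : {j // j ∈ pa i} => x' j.1) (x' i)
    rw [h1, h i le_rfl]
  have hsum2 : ∀ i : Fin N, ∀ x : ∀ j, Ω j,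
      ∑ a : Ω i, G2 i (Function.update x i a) = 1 := by
    intro i x
    have h1 : ∀ a : Ω i, G2 i (Function.update x i a)
        = p i (fun j : {j // j ∈ pa i} => x j.1) a := by
      intro a
      show p i (fun j : {j // j ∈ pa i} => Function.update x i a j.1)
          (Function.update x i a i)
        = p i (fun j : {j // j ∈ pa i} => x j.1) a
      have h2 : (fun j : {j // j ∈ pa i} => Function.update x i a j.1)
          = (fun j : {j // j ∈ pa i} => x j.1) := by
        funext j
        exact Function.update_of_ne (ne_of_lt (hpa i j.1 j.2)) _ _
      rw [h2, Function.update_self]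
    rw [Finset.sum_congr rfl fun a _ => h1 a]
    exact hp_sum i _
  have hdep1 : ∀ i : Fin N, ∀ x x' : ∀ j, Ω j,
      (∀ j, j ≤ i → x j = x' j) → G1 i x = G1 i x' := by
    intro i x x' h
    by_cases his : i = s
    · subst his
      rw [hG1s, hG1s, h i le_rfl]
    · rw [hG1ne i his, hG1ne i his]
      exact hdep2 i x x' h
  have hsum1 : ∀ i : Fin N, ∀ x : ∀ j, Ω j,
      ∑ a : Ω i, G1 i (Function.update x i a) = 1 := by
    intro i x
    by_cases his : i = s
    · subst his
      have h1 : ∀ a : Ω i, G1 i (Function.update x i a) = q a := by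
        intro a
        rw [hG1s, Function.update_self]
      rw [Finset.sum_congr rfl fun a _ => h1 a]
      exact hq_sum
    · rw [Finset.sum_congr rfl fun a _ => hG1ne i his (Function.update x i a)]
      exact hsum2 i x
  have hfix : ∀ (G : (i : Fin N) → (∀ j, Ω j) → ℝ),
      (∀ i, i ∉ Desc → ∀ x : ∀ j, Ω j, G i x = G2 i x) →
      ∀ i ∉ Desc, ∀ x ∈ Finset.univ.filter
        (fun x : ∀ j, Ω j => ∀ j ∉ Desc, x j = y₀ j), G i x = G i y₀ := by
    intro G hGp i hi x hx
    simp only [Finset.mem_filter, Finset.mem_univ, true_and] at hx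
    rw [hGp i hi, hGp i hi]
    have h1 : (fun j : {j // j ∈ pa i} => x j.1) = (fun j : {j // j ∈ pa i} => y₀ j.1) := by
      funext j
      exact hx j.1 (hclosed i hi j.1 j.2)
    show p i (fun j : {j // j ∈ pa i} => x j.1) (x i)
        = p i (fun j : {j // j ∈ pa i} => y₀ j.1) (y₀ i)
    rw [h1, hx i hi]
  have hG1p : ∀ i, i ∉ Desc → ∀ x : ∀ j, Ω j, G1 i x = G2 i x := by
    intro i hi x
    exact hG1ne i (fun h => hi (h ▸ hsD)) x
  have key1 : ∑ x ∈ Finset.univ.filter (fun x : ∀ j, Ω j => ∀ j ∉ Desc, x j = y₀ j),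
      ∏ i, G1 i x = ∏ i ∈ Descᶜ, G1 i y₀ :=
    aux_main Desc G1 y₀ (fun i _ => hdep1 i) (fun i _ => hsum1 i) (hfix G1 hG1p)
  have key2 : ∑ x ∈ Finset.univ.filter (fun x : ∀ j, Ω j => ∀ j ∉ Desc, x j = y₀ j),
      ∏ i, G2 i x = ∏ i ∈ Descᶜ, G2 i y₀ :=
    aux_main Desc G2 y₀ (fun i _ => hdep2 i) (fun i _ => hsum2 i)
      (hfix G2 (fun _ _ _ => rfl))
  have hCeq : ∏ i ∈ Descᶜ, G1 i y₀ = ∏ i ∈ Descᶜ, G2 i y₀ :=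
    Finset.prod_congr rfl fun i hi => hG1p i (Finset.mem_compl.1 hi) y₀
  have hL : ∀ x : ∀ j, Ω j,
      q (x s) * ∏ i ∈ Finset.univ.erase s, p i (fun j => x j.1) (x i) = ∏ i, G1 i x := by
    intro x
    rw [← Finset.mul_prod_erase Finset.univ (fun i => G1 i x) (Finset.mem_univ s)]
    congr 1
    · exact (hG1s x).symm
    · refine Finset.prod_congr rfl fun i hi => ?_
      exact (hG1ne i (Finset.mem_erase.1 hi).1 x).symm
  calc ∑ x ∈ Finset.univ.filter (fun x : (∀ i, Ω i) =>
        ∀ (j : Fin N) (h : ¬ Relation.ReflTransGen (fun a b => a ∈ pa b) s j),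
          x j = y ⟨j, h⟩),
      q (x s) * ∏ i ∈ Finset.univ.erase s, p i (fun j => x j.1) (x i)
      = ∑ x ∈ Finset.univ.filter (fun x : ∀ j, Ω j => ∀ j ∉ Desc, x j = y₀ j),
          ∏ i, G1 i x := by
        rw [hfilter]
        exact Finset.sum_congr rfl fun x _ => hL x
    _ = ∏ i ∈ Descᶜ, G1 i y₀ := key1
    _ = ∏ i ∈ Descᶜ, G2 i y₀ := hCeq
    _ = ∑ x ∈ Finset.univ.filter (fun x : ∀ j, Ω j => ∀ j ∉ Desc, x j = y₀ j),
          ∏ i, G2 i x := key2.symm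
    _ = _ := by rw [hfilter]
end

section
/- Let N ∈ ℕ and for each i ∈ Fin N let Ω i be a nonempty finite type. Let pa : Fin N → Finset (Fin N) satisfy j ∈ pa i → j < i, with conditional probability mass functions p_i, fix s ∈ Fin N with an intervention distribution q : Ω s → ℝ (nonnegative, summing to 1), and let P_do be the truncated mass function. Then the marginal distribution of coordinate s under P_do equals q: for every a ∈ Ω s, the sum of P_do(x) over all x with x_s = a equals q(a). -/
open scoped Classical

private lemma bn_key
    (N : ℕ) (Ω : Fin N → Type) [∀ i, Fintype (Ω i)] [∀ i, Nonempty (Ω i)]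
    (pa : Fin N → Finset (Fin N)) (hpa : ∀ i j, j ∈ pa i → j < i)
    (p : ∀ i : Fin N, ((j : {j // j ∈ pa i}) → Ω j.1) → Ω i → ℝ)
    (hp_sum : ∀ i par, ∑ a : Ω i, p i par a = 1)
    (s : Fin N) (a : Ω s) :
    ∀ S : Finset (Fin N), s ∉ S →
    ∑ x : (∀ i, Ω i), (if x s = a then (1:ℝ) else 0) * ∏ i ∈ S, p i (fun j => x j.1) (x i)
      = ∏ i ∈ Finset.univ.erase s \ S, (Fintype.card (Ω i) : ℝ) := by
  intro S
  induction S using Finset.strongInduction with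
  | _ S ih =>
    intro hs
    rcases S.eq_empty_or_nonempty with rfl | hne
    · -- base case
      simp only [Finset.prod_empty, mul_one, Finset.sdiff_empty]
      have e := Equiv.piSplitAt s Ω
      rw [← Equiv.sum_comp (Equiv.piSplitAt s Ω).symm
        (fun x => if x s = a then (1:ℝ) else 0)]
      rw [Fintype.sum_prod_type]
      have hval : ∀ (b : Ω s) (y : ∀ j : {j // j ≠ s}, Ω j),
          (Equiv.piSplitAt s Ω).symm (b, y) s = b := by
        intro b y
        simp [Equiv.piSplitAt_symm_apply]
      have : ∀ b : Ω s, (∑ y : ∀ j : {j // j ≠ s}, Ω j,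
          (if (Equiv.piSplitAt s Ω).symm (b, y) s = a then (1:ℝ) else 0))
          = if b = a then (Fintype.card (∀ j : {j // j ≠ s}, Ω j) : ℝ) else 0 := by
        intro b
        simp [hval]
      rw [Finset.sum_congr rfl fun b _ => this b]
      rw [Finset.sum_ite_eq' Finset.univ a]
      simp only [Finset.mem_univ, if_true]
      rw [Fintype.card_pi]
      push_cast
      rw [Finset.prod_subtype (Finset.univ.erase s)
        (p := fun j => j ≠ s) (fun x => by simp) (fun j => (Fintype.card (Ω j) : ℝ))]
    · -- inductive step
      set i₀ := S.max' hne with hi₀def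
      have hi₀S : i₀ ∈ S := S.max'_mem hne
      have hi₀s : i₀ ≠ s := fun h => hs (h ▸ hi₀S)
      set S' := S.erase i₀ with hS'def
      have hss : S' ⊂ S := Finset.erase_ssubset hi₀S
      have hsS' : s ∉ S' := fun h => hs (Finset.mem_of_mem_erase h)
      -- coordinates
      have hc : ∀ (b : Ω i₀) (y : ∀ j : {j // j ≠ i₀}, Ω j) (j : Fin N) (hj : j ≠ i₀),
          (Equiv.piSplitAt i₀ Ω).symm (b, y) j = y ⟨j, hj⟩ := by
        intro b y j hj
        simp [Equiv.piSplitAt_symm_apply, hj]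
      have hci : ∀ (b : Ω i₀) (y : ∀ j : {j // j ≠ i₀}, Ω j),
          (Equiv.piSplitAt i₀ Ω).symm (b, y) i₀ = b := by
        intro b y
        simp [Equiv.piSplitAt_symm_apply]
      set F : (∀ i, Ω i) → ℝ := fun x =>
        (if x s = a then (1:ℝ) else 0) * ∏ i ∈ S', p i (fun j => x j.1) (x i) with hF
      -- F only depends on coordinates ≠ i₀
      have hFeq : ∀ (b b' : Ω i₀) (y : ∀ j : {j // j ≠ i₀}, Ω j),
          F ((Equiv.piSplitAt i₀ Ω).symm (b, y)) = F ((Equiv.piSplitAt i₀ Ω).symm (b', y)) := by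
        intro b b' y
        have hcoord : ∀ (j : Fin N), j ≠ i₀ →
            (Equiv.piSplitAt i₀ Ω).symm (b, y) j = (Equiv.piSplitAt i₀ Ω).symm (b', y) j := by
          intro j hj; rw [hc b y j hj, hc b' y j hj]
        simp only [hF]
        rw [hcoord s hi₀s.symm]
        congr 1
        refine Finset.prod_congr rfl fun i hi => ?_
        have hii₀ : i ≠ i₀ := Finset.ne_of_mem_erase hi
        have hilt : i < i₀ := lt_of_le_of_ne (S.le_max' i (Finset.mem_of_mem_erase hi)) hii₀
        have harg : (fun j : {j // j ∈ pa i} => (Equiv.piSplitAt i₀ Ω).symm (b, y) j.1)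
            = (fun j : {j // j ∈ pa i} => (Equiv.piSplitAt i₀ Ω).symm (b', y) j.1) := by
          funext j
          exact hcoord j.1 (ne_of_lt (lt_trans (hpa i j.1 j.2) hilt))
        rw [harg, hcoord i hii₀]
      -- factorization f x = p i₀ ... (x i₀) * F x
      have hfac : ∀ x : ∀ i, Ω i,
          (if x s = a then (1:ℝ) else 0) * ∏ i ∈ S, p i (fun j => x j.1) (x i)
          = p i₀ (fun j => x j.1) (x i₀) * F x := by
        intro x
        rw [hF, ← Finset.mul_prod_erase S _ hi₀S, ← hS'def]
        ring
      -- parents of i₀ don't depend on b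
      have hpar : ∀ (b b' : Ω i₀) (y : ∀ j : {j // j ≠ i₀}, Ω j),
          (fun j : {j // j ∈ pa i₀} => (Equiv.piSplitAt i₀ Ω).symm (b, y) j.1)
          = (fun j : {j // j ∈ pa i₀} => (Equiv.piSplitAt i₀ Ω).symm (b', y) j.1) := by
        intro b b' y
        funext j
        have hj : j.1 ≠ i₀ := ne_of_lt (hpa i₀ j.1 j.2)
        rw [hc b y j.1 hj, hc b' y j.1 hj]
      obtain ⟨b₀⟩ := ‹∀ i, Nonempty (Ω i)› i₀
      -- rewrite LHS(S)
      have hLHS : ∑ x : (∀ i, Ω i),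
          (if x s = a then (1:ℝ) else 0) * ∏ i ∈ S, p i (fun j => x j.1) (x i)
          = ∑ y : ∀ j : {j // j ≠ i₀}, Ω j, F ((Equiv.piSplitAt i₀ Ω).symm (b₀, y)) := by
        rw [← Equiv.sum_comp (Equiv.piSplitAt i₀ Ω).symm
          (fun x => (if x s = a then (1:ℝ) else 0) * ∏ i ∈ S, p i (fun j => x j.1) (x i))]
        rw [Fintype.sum_prod_type, Finset.sum_comm]
        refine Finset.sum_congr rfl fun y _ => ?_
        have : ∀ b : Ω i₀, (if (Equiv.piSplitAt i₀ Ω).symm (b, y) s = a then (1:ℝ) else 0)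
            * ∏ i ∈ S, p i (fun j => (Equiv.piSplitAt i₀ Ω).symm (b, y) j.1)
                ((Equiv.piSplitAt i₀ Ω).symm (b, y) i)
            = p i₀ (fun j : {j // j ∈ pa i₀} => (Equiv.piSplitAt i₀ Ω).symm (b₀, y) j.1) b
              * F ((Equiv.piSplitAt i₀ Ω).symm (b₀, y)) := by
          intro b
          rw [hfac, hci, hpar b b₀ y, hFeq b b₀ y]
        rw [Finset.sum_congr rfl fun b _ => this b, ← Finset.sum_mul, hp_sum, one_mul]
      -- rewrite LHS(S')
      have hLHS' : ∑ x : (∀ i, Ω i),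
          (if x s = a then (1:ℝ) else 0) * ∏ i ∈ S', p i (fun j => x j.1) (x i)
          = (Fintype.card (Ω i₀) : ℝ) *
            ∑ y : ∀ j : {j // j ≠ i₀}, Ω j, F ((Equiv.piSplitAt i₀ Ω).symm (b₀, y)) := by
        rw [← Equiv.sum_comp (Equiv.piSplitAt i₀ Ω).symm F]
        rw [Fintype.sum_prod_type, Finset.sum_comm]
        rw [Finset.mul_sum]
        refine Finset.sum_congr rfl fun y _ => ?_
        rw [Finset.sum_congr rfl fun b _ => hFeq b b₀ y]
        simp [Finset.sum_const, nsmul_eq_mul]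
      have hIH := ih S' hss hsS'
      rw [hLHS'] at hIH
      -- sdiff relation
      have hsd : Finset.univ.erase s \ S' = insert i₀ (Finset.univ.erase s \ S) := by
        ext j
        simp only [Finset.mem_sdiff, Finset.mem_erase, Finset.mem_univ, and_true,
          Finset.mem_insert, hS'def, Finset.mem_erase]
        constructor
        · rintro ⟨hjs, hj⟩
          by_cases hji : j = i₀
          · exact Or.inl hji
          · exact Or.inr ⟨hjs, fun h => hj ⟨hji, h⟩⟩
        · rintro (rfl | ⟨hjs, hj⟩)
          · exact ⟨hi₀s, fun h => h.1 rfl⟩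
          · exact ⟨hjs, fun h => hj h.2⟩
      have hi₀notin : i₀ ∉ Finset.univ.erase s \ S := by
        simp [hi₀S]
      rw [hsd, Finset.prod_insert hi₀notin] at hIH
      have hcard : (Fintype.card (Ω i₀) : ℝ) ≠ 0 := by
        exact_mod_cast Fintype.card_ne_zero
      rw [hLHS]
      exact mul_left_cancel₀ hcard hIH

/-- For a Bayesian network with finite state spaces and topologically ordered parents,
under the truncated factorization `P_do(x) = q(x_s) · ∏_{i ≠ s} pᵢ(xᵢ | x restricted to
pa i)` of a perfect intervention `do(X_s ∼ q)`, the marginal distribution of coordinate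
`s` equals `q`: for every `a : Ω s`, summing `P_do` over all `x` with `x s = a` gives
`q a`. -/
theorem intervention_marginal_eq_q
    (N : ℕ) (Ω : Fin N → Type) [∀ i, Fintype (Ω i)] [∀ i, Nonempty (Ω i)]
    (pa : Fin N → Finset (Fin N)) (hpa : ∀ i j, j ∈ pa i → j < i)
    (p : ∀ i : Fin N, ((j : {j // j ∈ pa i}) → Ω j.1) → Ω i → ℝ)
    (hp_nonneg : ∀ i par a, 0 ≤ p i par a)
    (hp_sum : ∀ i par, ∑ a : Ω i, p i par a = 1)
    (s : Fin N) (q : Ω s → ℝ)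
    (hq_nonneg : ∀ a, 0 ≤ q a) (hq_sum : ∑ a : Ω s, q a = 1)
    (a : Ω s) :
    ∑ x ∈ Finset.univ.filter (fun x : (∀ i, Ω i) => x s = a),
      q (x s) * ∏ i ∈ Finset.univ.erase s, p i (fun j => x j.1) (x i) = q a := by
  have key := bn_key N Ω pa hpa p hp_sum s a (Finset.univ.erase s) (by simp)
  rw [Finset.sdiff_self, Finset.prod_empty] at key
  calc ∑ x ∈ Finset.univ.filter (fun x : (∀ i, Ω i) => x s = a),
      q (x s) * ∏ i ∈ Finset.univ.erase s, p i (fun j => x j.1) (x i)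
      = ∑ x ∈ Finset.univ.filter (fun x : (∀ i, Ω i) => x s = a),
        q a * ∏ i ∈ Finset.univ.erase s, p i (fun j => x j.1) (x i) := by
        refine Finset.sum_congr rfl fun x hx => ?_
        rw [(Finset.mem_filter.mp hx).2]
    _ = q a * ∑ x ∈ Finset.univ.filter (fun x : (∀ i, Ω i) => x s = a),
        ∏ i ∈ Finset.univ.erase s, p i (fun j => x j.1) (x i) := by
        rw [Finset.mul_sum]
    _ = q a * ∑ x : (∀ i, Ω i), (if x s = a then (1:ℝ) else 0) *
        ∏ i ∈ Finset.univ.erase s, p i (fun j => x j.1) (x i) := by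
        rw [Finset.sum_filter]
        congr 1
        refine Finset.sum_congr rfl fun x _ => ?_
        by_cases h : x s = a <;> simp [h]
    _ = q a := by rw [key, mul_one]
end

section
/- Let N ∈ ℕ and for each i ∈ Fin N let Ω i be a nonempty finite type. Let pa : Fin N → Finset (Fin N) satisfy j ∈ pa i → j < i, with conditional probability mass functions p_i, fix s ∈ Fin N with an intervention distribution q : Ω s → ℝ (nonnegative, summing to 1), and let P_do be the truncated mass function. Let A be the set of nodes that are not descendants of s. Then under P_do, the intervened variable X_s is independent of the tuple of non-descendants: for every a ∈ Ω s and every assignment y to the coordinates in A, P_do({x : x_s = a and x restricted to A = y}) = q(a) · P_do({x : x restricted to A = y}). -/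
open scoped Classical

theorem bn_sumout
    {N : ℕ} {Ω : Fin N → Type} [∀ i, Fintype (Ω i)]
    (pa : Fin N → Finset (Fin N)) (hpa : ∀ i j, j ∈ pa i → j < i)
    (p : ∀ i : Fin N, ((j : {j // j ∈ pa i}) → Ω j.1) → Ω i → ℝ)
    (hp_sum : ∀ i par, ∑ a : Ω i, p i par a = 1) :
    ∀ (E : Finset (Fin N)), (∀ i j, j ∈ pa i → j ∈ E → i ∈ E) →
    ∀ (x₀ : ∀ i, Ω i),
    ∑ x ∈ Finset.univ.filter (fun x : ∀ i, Ω i => ∀ j ∉ E, x j = x₀ j),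
      ∏ i ∈ E, p i (fun j => x j.1) (x i) = 1 := by
  intro E
  induction E using Finset.strongInduction with
  | _ E ih =>
    intro hE x₀
    rcases E.eq_empty_or_nonempty with rfl | hne
    · have hset : Finset.univ.filter
          (fun x : ∀ i, Ω i => ∀ j ∉ (∅ : Finset (Fin N)), x j = x₀ j) = {x₀} := by
        ext x
        simp [funext_iff]
      rw [hset]
      simp
    · set m := E.min' hne with hm
      have hmE : m ∈ E := E.min'_mem hne
      have hpam : ∀ j ∈ pa m, j ∉ E := by
        intro j hj hjE
        exact absurd (E.min'_le j hjE) (not_le.2 (hpa m j hj))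
      have hsub : E.erase m ⊂ E := Finset.erase_ssubset hmE
      have hE' : ∀ i j, j ∈ pa i → j ∈ E.erase m → i ∈ E.erase m := by
        intro i j hj hjE
        have hjE' := Finset.mem_of_mem_erase hjE
        refine Finset.mem_erase.2 ⟨?_, hE i j hj hjE'⟩
        rintro rfl
        exact hpam j hj hjE'
      rw [← Finset.sum_fiberwise _ (fun x => x m) _]
      have key : ∀ v : Ω m,
          ∑ x ∈ (Finset.univ.filter (fun x : ∀ i, Ω i => ∀ j ∉ E, x j = x₀ j)).filter
              (fun x => x m = v),
            ∏ i ∈ E, p i (fun j => x j.1) (x i)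
          = p m (fun j => x₀ j.1) v := by
        intro v
        have hset : (Finset.univ.filter (fun x : ∀ i, Ω i => ∀ j ∉ E, x j = x₀ j)).filter
              (fun x => x m = v)
            = Finset.univ.filter
              (fun x : ∀ i, Ω i => ∀ j ∉ E.erase m, x j = Function.update x₀ m v j) := by
          ext x
          simp only [Finset.mem_filter, Finset.mem_univ, true_and]
          constructor
          · rintro ⟨h1, h2⟩ j hj
            by_cases hjm : j = m
            · subst hjm; simp [h2]
            · rw [Function.update_of_ne hjm]
              exact h1 j (fun hjE => hj (Finset.mem_erase.2 ⟨hjm, hjE⟩))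
          · intro h
            have hxm : x m = v := by
              have := h m (Finset.notMem_erase m E)
              simpa using this
            refine ⟨?_, hxm⟩
            intro j hjE
            have hjm : j ≠ m := fun e => hjE (e ▸ hmE)
            have := h j (fun hj' => hjE (Finset.mem_of_mem_erase hj'))
            rwa [Function.update_of_ne hjm] at this
        rw [hset]
        have hcongr : ∀ x ∈ Finset.univ.filter
              (fun x : ∀ i, Ω i => ∀ j ∉ E.erase m, x j = Function.update x₀ m v j),
            ∏ i ∈ E, p i (fun j => x j.1) (x i)
            = p m (fun j => x₀ j.1) v * ∏ i ∈ E.erase m, p i (fun j => x j.1) (x i) := by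
          intro x hx
          rw [Finset.mem_filter] at hx
          have hx' := hx.2
          have hxm : x m = v := by
            have := hx' m (Finset.notMem_erase m E)
            simpa using this
          have hpar : (fun j : {j // j ∈ pa m} => x j.1) = fun j : {j // j ∈ pa m} => x₀ j.1 := by
            funext j
            have hjE : j.1 ∉ E := hpam j.1 j.2
            have hjm : j.1 ≠ m := ne_of_lt (hpa m j.1 j.2)
            have := hx' j.1 (fun hj' => hjE (Finset.mem_of_mem_erase hj'))
            rwa [Function.update_of_ne hjm] at this
          rw [← Finset.mul_prod_erase E _ hmE, hpar, hxm]
        rw [Finset.sum_congr rfl hcongr, ← Finset.mul_sum,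
          ih (E.erase m) hsub hE' (Function.update x₀ m v), mul_one]
      rw [Finset.sum_congr rfl (fun v _ => key v)]
      exact hp_sum m _

/-- For a Bayesian network with finite state spaces and topologically ordered parents,
under the truncated factorization `P_do` of a perfect intervention `do(X_s ∼ q)`, the
intervened variable `X_s` is independent of the tuple of non-descendants of `s`
(descendant meaning reachable from `s` along a directed path, including `s` itself):
for every `a : Ω s` and every assignment `y` to the non-descendant coordinates,
`P_do({x : x s = a ∧ x restricted to non-descendants = y})
  = q a · P_do({x : x restricted to non-descendants = y})`. -/
theorem intervention_indep_nondescendants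
    (N : ℕ) (Ω : Fin N → Type) [∀ i, Fintype (Ω i)] [∀ i, Nonempty (Ω i)]
    (pa : Fin N → Finset (Fin N)) (hpa : ∀ i j, j ∈ pa i → j < i)
    (p : ∀ i : Fin N, ((j : {j // j ∈ pa i}) → Ω j.1) → Ω i → ℝ)
    (hp_nonneg : ∀ i par a, 0 ≤ p i par a)
    (hp_sum : ∀ i par, ∑ a : Ω i, p i par a = 1)
    (s : Fin N) (q : Ω s → ℝ)
    (hq_nonneg : ∀ a, 0 ≤ q a) (hq_sum : ∑ a : Ω s, q a = 1)
    (a : Ω s)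
    (y : (j : {j : Fin N // ¬ Relation.ReflTransGen (fun a b => a ∈ pa b) s j}) → Ω j.1) :
    ∑ x ∈ Finset.univ.filter (fun x : (∀ i, Ω i) =>
        x s = a ∧
        ∀ (j : Fin N) (h : ¬ Relation.ReflTransGen (fun a b => a ∈ pa b) s j),
          x j = y ⟨j, h⟩),
      q (x s) * ∏ i ∈ Finset.univ.erase s, p i (fun j => x j.1) (x i)
    = q a *
      ∑ x ∈ Finset.univ.filter (fun x : (∀ i, Ω i) =>
        ∀ (j : Fin N) (h : ¬ Relation.ReflTransGen (fun a b => a ∈ pa b) s j),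
          x j = y ⟨j, h⟩),
      q (x s) * ∏ i ∈ Finset.univ.erase s, p i (fun j => x j.1) (x i) := by
  let D : Fin N → Prop := Relation.ReflTransGen (fun a b => a ∈ pa b) s
  show (∑ x ∈ Finset.univ.filter (fun x : (∀ i, Ω i) =>
        x s = a ∧ ∀ (j : Fin N) (h : ¬ D j), x j = y ⟨j, h⟩),
      q (x s) * ∏ i ∈ Finset.univ.erase s, p i (fun j => x j.1) (x i))
    = q a *
      ∑ x ∈ Finset.univ.filter (fun x : (∀ i, Ω i) =>
        ∀ (j : Fin N) (h : ¬ D j), x j = y ⟨j, h⟩),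
      q (x s) * ∏ i ∈ Finset.univ.erase s, p i (fun j => x j.1) (x i)
  have hDs : D s := Relation.ReflTransGen.refl
  have hmono : ∀ j, D j → s ≤ j := by
    intro j hj
    induction hj with
    | refl => exact le_refl s
    | tail _ h ih => exact le_of_lt (lt_of_le_of_lt ih (hpa _ _ h))
  set E : Finset (Fin N) := Finset.univ.filter (fun i => D i ∧ i ≠ s) with hEdef
  set F : Finset (Fin N) := Finset.univ.filter (fun i => ¬ D i) with hFdef
  have hsE : s ∉ E := by simp [hEdef]
  have hE : ∀ i j, j ∈ pa i → j ∈ E → i ∈ E := by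
    intro i j hj hjE
    rw [hEdef, Finset.mem_filter] at hjE ⊢
    obtain ⟨-, hDj, hjs⟩ := hjE
    refine ⟨Finset.mem_univ i, hDj.tail hj, ?_⟩
    rintro rfl
    exact absurd (hmono j hDj) (not_le.2 (hpa i j hj))
  have hFclosed : ∀ i j, j ∈ pa i → ¬ D i → ¬ D j := by
    intro i j hj hi hDj
    exact hi (hDj.tail hj)
  set x₁ : ∀ j, Ω j := fun j =>
    if h : ¬ D j then y ⟨j, h⟩ else Classical.arbitrary (Ω j) with hx₁
  set C : ℝ := ∏ i ∈ F, p i (fun j => x₁ j.1) (x₁ i) with hC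
  -- key lemma: the inner sum is C regardless of the value at s
  have hS : ∀ b : Ω s,
      ∑ x ∈ Finset.univ.filter (fun x : ∀ i, Ω i =>
          x s = b ∧ ∀ (j : Fin N) (h : ¬ D j), x j = y ⟨j, h⟩),
        ∏ i ∈ Finset.univ.erase s, p i (fun j => x j.1) (x i) = C := by
    intro b
    have hEF : Disjoint E F := by
      rw [Finset.disjoint_left]
      intro i hiE hiF
      rw [hEdef, Finset.mem_filter] at hiE
      rw [hFdef, Finset.mem_filter] at hiF
      exact hiF.2 hiE.2.1
    have hunion : E ∪ F = Finset.univ.erase s := by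
      ext i
      rw [Finset.mem_union, hEdef, hFdef, Finset.mem_filter, Finset.mem_filter,
        Finset.mem_erase]
      constructor
      · rintro (⟨-, -, his⟩ | ⟨-, hi⟩)
        · exact ⟨his, Finset.mem_univ i⟩
        · exact ⟨fun e => hi (e ▸ hDs), Finset.mem_univ i⟩
      · rintro ⟨his, -⟩
        by_cases hi : D i
        · exact Or.inl ⟨Finset.mem_univ i, hi, his⟩
        · exact Or.inr ⟨Finset.mem_univ i, hi⟩
    have hcongr : ∀ x ∈ Finset.univ.filter (fun x : ∀ i, Ω i =>
          x s = b ∧ ∀ (j : Fin N) (h : ¬ D j), x j = y ⟨j, h⟩),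
        ∏ i ∈ Finset.univ.erase s, p i (fun j => x j.1) (x i)
        = C * ∏ i ∈ E, p i (fun j => x j.1) (x i) := by
      intro x hx
      rw [Finset.mem_filter] at hx
      obtain ⟨-, hxs, hxy⟩ := hx
      have hxagree : ∀ j, ¬ D j → x j = x₁ j := by
        intro j hj
        rw [hxy j hj, hx₁]
        simp [hj]
      have hFprod : ∏ i ∈ F, p i (fun j => x j.1) (x i) = C := by
        rw [hC]
        refine Finset.prod_congr rfl ?_
        intro i hi
        rw [hFdef, Finset.mem_filter] at hi
        have h1 : (fun j : {j // j ∈ pa i} => x j.1) = fun j : {j // j ∈ pa i} => x₁ j.1 := by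
          funext j
          exact hxagree j.1 (hFclosed i j.1 j.2 hi.2)
        rw [h1, hxagree i hi.2]
      rw [← hunion, Finset.prod_union hEF, hFprod, mul_comm]
    rw [Finset.sum_congr rfl hcongr, ← Finset.mul_sum]
    have hfilter : Finset.univ.filter (fun x : ∀ i, Ω i =>
          x s = b ∧ ∀ (j : Fin N) (h : ¬ D j), x j = y ⟨j, h⟩)
        = Finset.univ.filter (fun x : ∀ i, Ω i =>
          ∀ j ∉ E, x j = Function.update x₁ s b j) := by
      ext x
      simp only [Finset.mem_filter, Finset.mem_univ, true_and]
      constructor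
      · rintro ⟨hxs, hxy⟩ j hj
        by_cases hjs : j = s
        · subst hjs; simp [hxs]
        · rw [Function.update_of_ne hjs]
          have hDj : ¬ D j := by
            intro hDj
            exact hj (by rw [hEdef, Finset.mem_filter]; exact ⟨Finset.mem_univ j, hDj, hjs⟩)
          rw [hxy j hDj, hx₁]
          simp [hDj]
      · intro h
        constructor
        · have := h s hsE
          simpa using this
        · intro j hDj
          have hjs : j ≠ s := fun e => hDj (e ▸ hDs)
          have hjE : j ∉ E := by
            rw [hEdef, Finset.mem_filter]
            rintro ⟨-, hDj', -⟩
            exact hDj hDj'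
          have := h j hjE
          rw [Function.update_of_ne hjs, hx₁] at this
          simpa [hDj] using this
    rw [hfilter, bn_sumout pa hpa p hp_sum E hE (Function.update x₁ s b), mul_one]
  -- now the main computation
  have hLHS : ∑ x ∈ Finset.univ.filter (fun x : (∀ i, Ω i) =>
        x s = a ∧
        ∀ (j : Fin N) (h : ¬ D j), x j = y ⟨j, h⟩),
      q (x s) * ∏ i ∈ Finset.univ.erase s, p i (fun j => x j.1) (x i)
      = q a * C := by
    have : ∀ x ∈ Finset.univ.filter (fun x : (∀ i, Ω i) =>
          x s = a ∧ ∀ (j : Fin N) (h : ¬ D j), x j = y ⟨j, h⟩),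
        q (x s) * ∏ i ∈ Finset.univ.erase s, p i (fun j => x j.1) (x i)
        = q a * ∏ i ∈ Finset.univ.erase s, p i (fun j => x j.1) (x i) := by
      intro x hx
      rw [Finset.mem_filter] at hx
      rw [hx.2.1]
    rw [Finset.sum_congr rfl this, ← Finset.mul_sum, hS a]
  have hRHS : ∑ x ∈ Finset.univ.filter (fun x : (∀ i, Ω i) =>
        ∀ (j : Fin N) (h : ¬ D j), x j = y ⟨j, h⟩),
      q (x s) * ∏ i ∈ Finset.univ.erase s, p i (fun j => x j.1) (x i) = C := by
    rw [← Finset.sum_fiberwise _ (fun x : ∀ i, Ω i => x s) _]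
    have hfib : ∀ b : Ω s,
        ∑ x ∈ (Finset.univ.filter (fun x : (∀ i, Ω i) =>
            ∀ (j : Fin N) (h : ¬ D j), x j = y ⟨j, h⟩)).filter (fun x => x s = b),
          q (x s) * ∏ i ∈ Finset.univ.erase s, p i (fun j => x j.1) (x i)
        = q b * C := by
      intro b
      have hset : (Finset.univ.filter (fun x : (∀ i, Ω i) =>
            ∀ (j : Fin N) (h : ¬ D j), x j = y ⟨j, h⟩)).filter (fun x => x s = b)
          = Finset.univ.filter (fun x : ∀ i, Ω i =>
            x s = b ∧ ∀ (j : Fin N) (h : ¬ D j), x j = y ⟨j, h⟩) := by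
        ext x
        simp only [Finset.filter_filter, Finset.mem_filter, Finset.mem_univ, true_and]
        tauto
      rw [hset]
      have : ∀ x ∈ Finset.univ.filter (fun x : ∀ i, Ω i =>
            x s = b ∧ ∀ (j : Fin N) (h : ¬ D j), x j = y ⟨j, h⟩),
          q (x s) * ∏ i ∈ Finset.univ.erase s, p i (fun j => x j.1) (x i)
          = q b * ∏ i ∈ Finset.univ.erase s, p i (fun j => x j.1) (x i) := by
        intro x hx
        rw [Finset.mem_filter] at hx
        rw [hx.2.1]
      rw [Finset.sum_congr rfl this, ← Finset.mul_sum, hS b]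
    rw [Finset.sum_congr rfl (fun b _ => hfib b), ← Finset.sum_mul, hq_sum, one_mul]
  rw [hLHS, hRHS]
end
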